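/- A frame F is dense (∀x,y: xRy implies ∃z with xRz and zRy) iff the sequent ♦p ⊢ ♦♦p is valid on F, where ♦φ := ¬■¬φ. -/

import Mathlib

/-- Formulas of the language with ¬, ∧, ∨, □, ■, 𝐈 and ▲. -/
inductive Form : Type
  | var : ℕ → Form
  | neg : Form → Form
  | conj : Form → Form → Form
  | disj : Form → Form → Form
  | box : Form → Form
  | bbox : Form → Form
  | ign : Form → Form
  | tri : Form → Form

/-- A Kripke model for Belnap–Dunn modal logic. -/
structure Model (W : Type) where
  R : W → W → Prop
  vp : ℕ → W → Prop
  vn : ℕ → W → Prop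

mutual
  /-- support of truth -/
  def tr {W : Type} (M : Model W) : Form → W → Prop
    | .var n, w => M.vp n w
    | .neg φ, w => fa M φ w
    | .conj φ ψ, w => tr M φ w ∧ tr M ψ w
    | .disj φ ψ, w => tr M φ w ∨ tr M ψ w
    | .box φ, w => ∀ w', M.R w w' → tr M φ w'
    | .bbox φ, w => (∀ w', M.R w w' → tr M φ w') ∧
        ∀ w₁ w₂, M.R w w₁ → M.R w w₂ → fa M φ w₁ → fa M φ w₂
    | .ign φ, w => tr M φ w ∧ (∀ w', M.R w w' → w' ≠ w → fa M φ w') ∧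
        ∀ w₁ w₂, M.R w w₁ → w₁ ≠ w → M.R w w₂ → w₂ ≠ w → tr M φ w₁ → tr M φ w₂
    | .tri φ, w => (∀ w₁ w₂, M.R w w₁ → M.R w w₂ →
          (tr M φ w₁ → tr M φ w₂) ∧ (fa M φ w₁ → fa M φ w₂)) ∧
        ∀ w', M.R w w' → tr M φ w' ∨ fa M φ w'
  /-- support of falsity -/
  def fa {W : Type} (M : Model W) : Form → W → Prop
    | .var n, w => M.vn n w
    | .neg φ, w => tr M φ w
    | .conj φ ψ, w => fa M φ w ∨ fa M ψ w
    | .disj φ ψ, w => fa M φ w ∧ fa M ψ w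
    | .box φ, w => ∃ w', M.R w w' ∧ fa M φ w'
    | .bbox φ, w => (∃ w', M.R w w' ∧ fa M φ w') ∨
        ∃ w₁ w₂, M.R w w₁ ∧ M.R w w₂ ∧ tr M φ w₁ ∧ ¬ tr M φ w₂
    | .ign φ, w => fa M φ w ∨ (∃ w', M.R w w' ∧ w' ≠ w ∧ tr M φ w') ∨
        ∃ w₁ w₂, (M.R w w₁ ∧ w₁ ≠ w) ∧ (M.R w w₂ ∧ w₂ ≠ w) ∧ ¬ fa M φ w₁ ∧ fa M φ w₂
    | .tri φ, w => (∃ w₁ w₂, M.R w w₁ ∧ M.R w w₂ ∧ tr M φ w₁ ∧ ¬ tr M φ w₂) ∨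
        (∃ w₁ w₂, M.R w w₁ ∧ M.R w w₂ ∧ fa M φ w₁ ∧ ¬ fa M φ w₂) ∨
        (∃ w₁ w₂, M.R w w₁ ∧ M.R w w₂ ∧ tr M φ w₁ ∧ fa M φ w₂)
end

/-- φ contains an occurrence of □ -/
def hasBox : Form → Prop
  | .var _ => False
  | .neg φ => hasBox φ
  | .conj φ ψ => hasBox φ ∨ hasBox ψ
  | .disj φ ψ => hasBox φ ∨ hasBox ψ
  | .box _ => True
  | .bbox φ => hasBox φ
  | .ign φ => hasBox φ
  | .tri φ => hasBox φ

/-- φ contains an occurrence of ■ -/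
def hasBBox : Form → Prop
  | .var _ => False
  | .neg φ => hasBBox φ
  | .conj φ ψ => hasBBox φ ∨ hasBBox ψ
  | .disj φ ψ => hasBBox φ ∨ hasBBox ψ
  | .box φ => hasBBox φ
  | .bbox _ => True
  | .ign φ => hasBBox φ
  | .tri φ => hasBBox φ

/-- φ contains an occurrence of 𝐈 -/
def hasIgn : Form → Prop
  | .var _ => False
  | .neg φ => hasIgn φ
  | .conj φ ψ => hasIgn φ ∨ hasIgn ψ
  | .disj φ ψ => hasIgn φ ∨ hasIgn ψ
  | .box φ => hasIgn φ
  | .bbox φ => hasIgn φ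
  | .ign _ => True
  | .tri φ => hasIgn φ

/-- φ contains an occurrence of ▲ -/
def hasTri : Form → Prop
  | .var _ => False
  | .neg φ => hasTri φ
  | .conj φ ψ => hasTri φ ∨ hasTri ψ
  | .disj φ ψ => hasTri φ ∨ hasTri ψ
  | .box φ => hasTri φ
  | .bbox φ => hasTri φ
  | .ign φ => hasTri φ
  | .tri _ => True

/-- validity of the sequent φ ⊢ χ on the frame (W,R) -/
def validOn {W : Type} (R : W → W → Prop) (φ χ : Form) : Prop :=
  ∀ (vp vn : ℕ → W → Prop) (w : W), tr ⟨R, vp, vn⟩ φ w → tr ⟨R, vp, vn⟩ χ w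

/-- ♦φ := ¬■¬φ -/
def dia (φ : Form) : Form := .neg (.bbox (.neg φ))

/-!
♦φ holds at w iff some successor verifies φ or two successors disagree on refuting φ. On a dense
frame, insert a world between w and each such witness: the world before a φ-verifier verifies ♦φ;
the worlds before two disagreeing successors either disagree on refuting ♦φ, or the first one
does not refute ♦φ although it sees a φ-refuter, and then it verifies ♦φ. Conversely, given R x y,
let p be true only at y and false everywhere: ♦p holds at x, and ♦♦p can only hold at x through
a successor of x that sees y.
-/

section Diamond

variable {W : Type} {M : Model W} {φ : Form} {w : W}

theorem tr_dia_iff : tr M (dia φ) w ↔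
    (∃ u, M.R w u ∧ tr M φ u) ∨ ∃ u₁ u₂, M.R w u₁ ∧ M.R w u₂ ∧ fa M φ u₁ ∧ ¬ fa M φ u₂ := by
  simp only [dia, tr, fa]

theorem fa_dia_iff : fa M (dia φ) w ↔
    (∀ u, M.R w u → fa M φ u) ∧ ∀ u₁ u₂, M.R w u₁ → M.R w u₂ → tr M φ u₁ → tr M φ u₂ := by
  simp only [dia, tr, fa]

theorem tr_dia_of_rel {u : W} (hwu : M.R w u) (hu : tr M φ u) : tr M (dia φ) w :=
  tr_dia_iff.2 (Or.inl ⟨u, hwu, hu⟩)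

theorem not_fa_dia_of_rel {u : W} (hwu : M.R w u) (hu : ¬ fa M φ u) : ¬ fa M (dia φ) w :=
  fun h => hu ((fa_dia_iff.1 h).1 u hwu)

theorem tr_dia_of_not_fa_dia {u : W} (hwu : M.R w u) (hu : fa M φ u) (h : ¬ fa M (dia φ) w) :
    tr M (dia φ) w := by
  rw [fa_dia_iff, not_and_or] at h
  push Not at h
  rcases h with ⟨v, hwv, hv⟩ | ⟨v, -, hwv, -, hv, -⟩
  · exact tr_dia_iff.2 (Or.inr ⟨u, v, hwu, hwv, hu, hv⟩)
  · exact tr_dia_of_rel hwv hv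

theorem exists_rel_tr_of_tr_dia (hfa : ∀ u, fa M φ u) (h : tr M (dia φ) w) :
    ∃ u, M.R w u ∧ tr M φ u := by
  rcases tr_dia_iff.1 h with h | ⟨-, u₂, -, -, -, hu₂⟩
  · exact h
  · exact absurd (hfa u₂) hu₂

theorem exists_rel_tr_of_not_fa_dia (hfa : ∀ u, fa M φ u) (h : ¬ fa M (dia φ) w) :
    ∃ u, M.R w u ∧ tr M φ u := by
  rw [fa_dia_iff, not_and_or] at h
  push Not at h
  rcases h with ⟨u, -, hu⟩ | ⟨u, -, hwu, -, hu, -⟩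
  · exact absurd (hfa u) hu
  · exact ⟨u, hwu, hu⟩

theorem tr_dia_dia_of_dense (hd : ∀ x y, M.R x y → ∃ z, M.R x z ∧ M.R z y)
    (h : tr M (dia φ) w) : tr M (dia (dia φ)) w := by
  rcases tr_dia_iff.1 h with ⟨u, hwu, hu⟩ | ⟨u₁, u₂, hwu₁, hwu₂, hu₁, hu₂⟩
  · obtain ⟨z, hwz, hzu⟩ := hd w u hwu
    exact tr_dia_of_rel hwz (tr_dia_of_rel hzu hu)
  · obtain ⟨z₁, hwz₁, hzu₁⟩ := hd w u₁ hwu₁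
    obtain ⟨z₂, hwz₂, hzu₂⟩ := hd w u₂ hwu₂
    by_cases hz₁ : fa M (dia φ) z₁
    · exact tr_dia_iff.2 (Or.inr ⟨z₁, z₂, hwz₁, hwz₂, hz₁, not_fa_dia_of_rel hzu₂ hu₂⟩)
    · exact tr_dia_of_rel hwz₁ (tr_dia_of_not_fa_dia hzu₁ hu₁ hz₁)

end Diamond

theorem exists_between_of_validOn {W : Type} {R : W → W → Prop} {n : ℕ}
    (hv : validOn R (dia (.var n)) (dia (dia (.var n)))) {x y : W} (hxy : R x y) :
    ∃ z, R x z ∧ R z y := by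
  let M : Model W := ⟨R, fun _ u => u = y, fun _ _ => True⟩
  have hfa : ∀ u, fa M (.var n) u := fun _ => trivial
  have h : tr M (dia (dia (.var n))) x := hv M.vp M.vn x (tr_dia_of_rel (M := M) hxy rfl)
  rcases tr_dia_iff.1 h with ⟨z, hxz, hz⟩ | ⟨-, z₂, -, hxz₂, -, hz₂⟩
  · obtain ⟨u, hzu, hu⟩ := exists_rel_tr_of_tr_dia hfa hz
    exact ⟨z, hxz, (show u = y from hu) ▸ hzu⟩
  · obtain ⟨u, hzu, hu⟩ := exists_rel_tr_of_not_fa_dia hfa hz₂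
    exact ⟨z₂, hxz₂, (show u = y from hu) ▸ hzu⟩

/-- a frame is dense iff ♦p ⊢ ♦♦p is valid on it. -/
theorem dense_definability {W : Type} [Nonempty W] (R : W → W → Prop) :
    (∀ x y, R x y → ∃ z, R x z ∧ R z y) ↔
      validOn R (dia (.var 0)) (dia (dia (.var 0))) :=
  ⟨fun hd _ _ _ => tr_dia_dia_of_dense hd, fun hv _ _ => exists_between_of_validOn hv⟩
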